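/- If q topologically generates Z_p^× for an odd prime p, then the pro-cyclic group Z_p/(q^i − 1)Z_p is trivial when (p−1) does not divide i, and is cyclic of order p^{1+v_p(i)} when (p−1) divides i. -/
import Mathlib

lemma padic_pow_dvd_natCast (p : ℕ) [Fact p.Prime] (n N : ℕ) :
    (p : ℤ_[p]) ^ n ∣ (N : ℤ_[p]) ↔ p ^ n ∣ N := by
  constructor
  · intro h
    have hmem : (N : ℤ_[p]) ∈ Ideal.span {(p : ℤ_[p]) ^ n} :=
      Ideal.mem_span_singleton.mpr h
    rw [← PadicInt.ker_toZModPow n, RingHom.mem_ker, map_natCast] at hmem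
    exact (ZMod.natCast_eq_zero_iff N (p ^ n)).mp hmem
  · rintro ⟨c, rfl⟩
    push_cast
    exact Dvd.intro _ rfl

lemma padic_span_natCast_eq (p : ℕ) [Fact p.Prime] {N k : ℕ} (hN : N ≠ 0)
    (hv : padicValNat p N = k) :
    Ideal.span {(N : ℤ_[p])} = Ideal.span {(p : ℤ_[p]) ^ k} := by
  have h1 : (p : ℤ_[p]) ^ k ∣ (N : ℤ_[p]) :=
    (padic_pow_dvd_natCast p k N).mpr (hv ▸ pow_padicValNat_dvd)
  obtain ⟨c, hc⟩ := h1
  have hcu : IsUnit c := by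
    by_contra hcu
    have hnorm : ‖c‖ < 1 :=
      lt_of_le_of_ne (PadicInt.norm_le_one c) (fun h => hcu (PadicInt.isUnit_iff.mpr h))
    obtain ⟨d, rfl⟩ := (PadicInt.norm_lt_one_iff_dvd c).mp hnorm
    have hdvd : (p : ℤ_[p]) ^ (k + 1) ∣ (N : ℤ_[p]) := ⟨d, by rw [hc]; ring⟩
    have := (padic_pow_dvd_natCast p (k + 1) N).mp hdvd
    exact pow_succ_padicValNat_not_dvd hN (hv ▸ this)
  rw [hc]
  exact Ideal.span_singleton_mul_right_unit hcu _

/-- If `q` topologically generates `ℤ_p^×` for an odd prime `p`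
(i.e. `q` generates `(ℤ/p²)^×`), then the group `ℤ_p/(q^i − 1)ℤ_p` is trivial
when `(p−1) ∤ i`, and is cyclic of order `p^{1 + v_p(i)}` when `(p−1) ∣ i`. -/
theorem padic_quotient_q_pow_sub_one
    (p : ℕ) [Fact p.Prime] (hp : Odd p)
    (q : ℕ) (hq2 : 2 ≤ q)
    (hu : IsUnit (q : ZMod (p ^ 2)))
    (hgen : ∀ u : (ZMod (p ^ 2))ˣ, ∃ n : ℕ, u = hu.unit ^ n) :
    ∀ i : ℕ, 1 ≤ i →
      (¬ (p - 1) ∣ i →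
        Subsingleton
          (ℤ_[p] ⧸ (Ideal.span {((q : ℤ_[p]) ^ i - 1)} : Ideal ℤ_[p]))) ∧
        ((p - 1) ∣ i →
          Nonempty
            ((ℤ_[p] ⧸ (Ideal.span {((q : ℤ_[p]) ^ i - 1)} : Ideal ℤ_[p])) ≃+
              ZMod (p ^ (1 + padicValNat p i)))) := by
  have hp' : p.Prime := Fact.out
  have hp3 : 3 ≤ p := by
    have h2 := hp'.two_le
    have ho := Nat.odd_iff.mp hp
    omega
  -- p does not divide q
  have hpq : ¬ p ∣ q := by
    intro h
    have hco := (ZMod.isUnit_iff_coprime q (p ^ 2)).mp hu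
    have : p ∣ Nat.gcd q (p ^ 2) := Nat.dvd_gcd h (dvd_pow_self p two_ne_zero)
    rw [hco] at this
    exact hp'.one_lt.ne' (Nat.dvd_one.mp this)
  -- order of q mod p^2
  have hcard2 : Nat.card (ZMod (p ^ 2))ˣ = p * (p - 1) := by
    rw [Nat.card_eq_fintype_card, ZMod.card_units_eq_totient,
      Nat.totient_prime_pow hp' (by norm_num)]
    ring_nf
  have hord2 : orderOf hu.unit = p * (p - 1) := by
    rw [← hcard2]
    refine orderOf_eq_card_of_forall_mem_zpowers (fun u => ?_)
    obtain ⟨n, hn⟩ := hgen u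
    exact ⟨(n : ℤ), by simp [hn, zpow_natCast]⟩
  -- the unit q mod p
  have hdvdp : p ∣ p ^ 2 := dvd_pow_self p two_ne_zero
  set u1 : (ZMod p)ˣ := ZMod.unitsMap hdvdp hu.unit with hu1
  have hu1val : (u1 : ZMod p) = (q : ZMod p) := by
    simp [hu1, ZMod.unitsMap, hu.unit_spec]
  have hord1 : orderOf u1 = p - 1 := by
    have hcard1 : Nat.card (ZMod p)ˣ = p - 1 := by
      rw [Nat.card_eq_fintype_card, ZMod.card_units_eq_totient, Nat.totient_prime hp']
    rw [← hcard1]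
    refine orderOf_eq_card_of_forall_mem_zpowers (fun v => ?_)
    obtain ⟨w, hw⟩ := ZMod.unitsMap_surjective hdvdp v
    obtain ⟨n, hn⟩ := hgen w
    exact ⟨(n : ℤ), by simp [zpow_natCast, hu1, ← hw, hn, map_pow]⟩
  -- key divisibility equivalence
  have hkey : ∀ i : ℕ, 1 ≤ i → (p ∣ q ^ i - 1 ↔ (p - 1) ∣ i) := by
    intro i hi
    have h1q : 1 ≤ q ^ i := Nat.one_le_pow _ _ (by omega)
    rw [← hord1, orderOf_dvd_iff_pow_eq_one, ← Units.val_eq_one, Units.val_pow_eq_pow_val,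
      hu1val, ← ZMod.natCast_eq_zero_iff]
    rw [Nat.cast_sub h1q]
    push_cast
    rw [sub_eq_zero, eq_comm]
  intro i hi
  have h1qi : 1 ≤ q ^ i := Nat.one_le_pow _ _ (by omega)
  have hNnz : q ^ i - 1 ≠ 0 := by
    have : 1 < q ^ i := Nat.one_lt_pow (by omega) (by omega)
    omega
  have hcast : ((q : ℤ_[p]) ^ i - 1) = ((q ^ i - 1 : ℕ) : ℤ_[p]) := by
    rw [Nat.cast_sub h1qi]
    push_cast
    ring
  constructor
  · -- trivial case
    intro hnd
    have hnp : ¬ p ∣ q ^ i - 1 := fun h => hnd ((hkey i hi).mp h)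
    have hunit : IsUnit ((q ^ i - 1 : ℕ) : ℤ_[p]) := by
      refine PadicInt.isUnit_iff.mpr ?_
      by_contra h
      have hlt : ‖((q ^ i - 1 : ℕ) : ℤ_[p])‖ < 1 :=
        lt_of_le_of_ne (PadicInt.norm_le_one _) h
      have := (PadicInt.norm_lt_one_iff_dvd _).mp hlt
      rw [← pow_one (p : ℤ_[p])] at this
      exact hnp (by simpa using (padic_pow_dvd_natCast p 1 _).mp this)
    rw [Ideal.Quotient.subsingleton_iff, hcast, Ideal.span_singleton_eq_top]
    exact hunit
  · -- cyclic case
    intro hdvd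
    obtain ⟨m, hm⟩ := hdvd
    have hmnz : m ≠ 0 := by rintro rfl; omega
    have hp1nz : p - 1 ≠ 0 := by omega
    -- valuation of q^(p-1) - 1 is 1
    have hd1 : p ∣ q ^ (p - 1) - 1 := (hkey (p - 1) (by omega)).mpr dvd_rfl
    have hnd2 : ¬ p ^ 2 ∣ q ^ (p - 1) - 1 := by
      intro h
      have h1q : 1 ≤ q ^ (p - 1) := Nat.one_le_pow _ _ (by omega)
      have hz : ((q ^ (p - 1) - 1 : ℕ) : ZMod (p ^ 2)) = 0 :=
        (ZMod.natCast_eq_zero_iff _ _).mpr h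
      rw [Nat.cast_sub h1q] at hz
      push_cast at hz
      rw [sub_eq_zero] at hz
      have hpow : hu.unit ^ (p - 1) = 1 := by
        ext
        rw [Units.val_pow_eq_pow_val, hu.unit_spec, hz, Units.val_one]
      have := orderOf_dvd_of_pow_eq_one hpow
      rw [hord2] at this
      have hle : p * (p - 1) ≤ p - 1 := Nat.le_of_dvd (by omega) this
      nlinarith
    have hNp1nz : q ^ (p - 1) - 1 ≠ 0 := by
      have : 1 < q ^ (p - 1) := Nat.one_lt_pow (by omega) (by omega)
      omega
    have hv1 : padicValNat p (q ^ (p - 1) - 1) = 1 := by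
      have hle : 1 ≤ padicValNat p (q ^ (p - 1) - 1) := by
        rw [← padicValNat_dvd_iff_le hNp1nz, pow_one]; exact hd1
      have hge : padicValNat p (q ^ (p - 1) - 1) ≤ 1 := by
        by_contra h
        exact hnd2 ((padicValNat_dvd_iff_le hNp1nz).mpr (by omega))
      omega
    -- LTE
    have hlte : padicValNat p (q ^ i - 1) = 1 + padicValNat p m := by
      have hx : ¬ p ∣ q ^ (p - 1) := fun h => hpq (hp'.dvd_of_dvd_pow h)
      have hyx : 1 < q ^ (p - 1) := Nat.one_lt_pow (by omega) (by omega)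
      have := padicValNat.pow_sub_pow (p := p) hp hyx hd1 hx hmnz
      rw [← pow_mul, ← hm, one_pow] at this
      rw [this, hv1]
    have hvim : padicValNat p i = padicValNat p m := by
      rw [hm, padicValNat.mul hp1nz hmnz,
        padicValNat.eq_zero_of_not_dvd (Nat.not_dvd_of_pos_of_lt (by omega) (by omega)), zero_add]
    have hvN : padicValNat p (q ^ i - 1) = 1 + padicValNat p i := by
      rw [hlte, hvim]
    refine ⟨?_⟩
    rw [hcast, padic_span_natCast_eq p hNnz hvN, ← PadicInt.ker_toZModPow]
    have hsurj : Function.Surjective (PadicInt.toZModPow (p := p) (1 + padicValNat p i)) := by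
      intro z
      exact ⟨(z.val : ℕ), by simp [map_natCast, ZMod.natCast_val, ZMod.cast_id]⟩
    have e : (ℤ_[p] ⧸ RingHom.ker (PadicInt.toZModPow (p := p) (1 + padicValNat p i))) ≃+*
        ZMod (p ^ (1 + padicValNat p i)) := RingHom.quotientKerEquivOfSurjective hsurj
    exact e.toAddEquiv
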